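/- On a finite connected network with a proper subset U ⊂ V, let h : V → ℝ be discrete harmonic on U, let θ be a flow on U (antisymmetric, satisfying the node law at each vertex of U), and let f : V → ℝ agree with h on V∖U. Then ℰ(c df − c dh) + ℰ(θ − c dh) = ℰ(c df − θ), where ℰ denotes the energy (squared r-norm) on antisymmetric edge functions. -/

import Mathlib

/-!
Write `g = f - h` and `φ = θ - c dh`. Then `c df - c dh = c dg` and `c df - θ = c dg - φ`,
so the identity is Pythagoras for `c dg ⊥ φ` in the energy inner product `∑ a b r`,
i.e. `∑ dg · φ = 0`.
Since `φ` is antisymmetric this sum is `-2 ∑ₓ g(x) · (outflow of φ at x)`, and every summand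
vanishes: `g = 0` off `U`, while on `U` the outflows of `θ` and of `c dh` are both zero.
-/

open Finset

/-- The energy `(1/2) ∑_e θ(e)² r(e)` of an (antisymmetric) edge function. -/
noncomputable def energyE {E : Type*} [Fintype E] (c : E → ℝ) (θ : E → ℝ) : ℝ :=
  (1 / 2) * ∑ e, θ e ^ 2 * (c e)⁻¹

theorem energyE_sub {E : Type*} [Fintype E] (c a b : E → ℝ) :
    energyE c (fun e => a e - b e) = energyE c a + energyE c b - ∑ e, a e * b e * (c e)⁻¹ := by
  simp only [energyE, mul_sum, ← sum_add_distrib, ← sum_sub_distrib]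
  exact sum_congr rfl fun e _ => by ring

section Network

variable {V E : Type*} {rev : E → E} {tail head : E → V}

theorem head_rev_of_tail_rev (hrev : Function.Involutive rev)
    (htail_rev : ∀ e, tail (rev e) = head e) (e : E) : head (rev e) = tail e := by
  rw [← htail_rev, hrev]

theorem sum_head_mul_eq_neg_sum_tail_mul [Fintype E] (hrev : Function.Involutive rev)
    (hhead_rev : ∀ e, head (rev e) = tail e) {ψ : E → ℝ} (hψ : ∀ e, ψ (rev e) = -ψ e)
    (g : V → ℝ) : ∑ e, g (head e) * ψ e = -∑ e, g (tail e) * ψ e :=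
  calc ∑ e, g (head e) * ψ e = ∑ e, g (head (rev e)) * ψ (rev e) :=
        (hrev.bijective.sum_comp fun e => g (head e) * ψ e).symm
    _ = -∑ e, g (tail e) * ψ e := by simp only [hhead_rev, hψ, mul_neg, sum_neg_distrib]

theorem sum_tail_mul_eq_zero [Fintype V] [Fintype E] [DecidableEq V] {U : Set V} {g : V → ℝ}
    {ψ : E → ℝ} (hg : ∀ x ∉ U, g x = 0)
    (hψ : ∀ x ∈ U, ∑ e ∈ univ.filter (fun e => tail e = x), ψ e = 0) :
    ∑ e, g (tail e) * ψ e = 0 := by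
  rw [← sum_fiberwise univ tail]
  refine sum_eq_zero fun x _ => ?_
  rw [sum_congr rfl fun e he => by rw [(mem_filter.1 he).2], ← mul_sum]
  by_cases hx : x ∈ U
  · rw [hψ x hx, mul_zero]
  · rw [hg x hx, zero_mul]

theorem sum_grad_mul_eq_zero [Fintype V] [Fintype E] [DecidableEq V]
    (hrev : Function.Involutive rev) (hhead_rev : ∀ e, head (rev e) = tail e)
    {U : Set V} {g : V → ℝ} {ψ : E → ℝ}
    (hψanti : ∀ e, ψ (rev e) = -ψ e) (hg : ∀ x ∉ U, g x = 0)
    (hψ : ∀ x ∈ U, ∑ e ∈ univ.filter (fun e => tail e = x), ψ e = 0) :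
    ∑ e, (g (head e) - g (tail e)) * ψ e = 0 := by
  simp only [sub_mul, sum_sub_distrib]
  rw [sum_head_mul_eq_neg_sum_tail_mul hrev hhead_rev hψanti, sum_tail_mul_eq_zero hg hψ]
  ring

theorem sum_grad_eq_zero_of_harmonic [Fintype E] [DecidableEq V] {c : E → ℝ} {h : V → ℝ}
    {x : V}
    (hharm : h x * ∑ e ∈ univ.filter (fun e => tail e = x), c e =
      ∑ e ∈ univ.filter (fun e => tail e = x), c e * h (head e)) :
    ∑ e ∈ univ.filter (fun e => tail e = x), c e * (h (head e) - h (tail e)) = 0 := by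
  rw [sum_congr rfl fun e he => by rw [(mem_filter.1 he).2, mul_sub],
    sum_sub_distrib, ← hharm, ← sum_mul, mul_comm, sub_self]

end Network

theorem stmt_5_general {V E : Type*} [Fintype V] [Fintype E] [DecidableEq V]
    (rev : E → E) (hrev : ∀ e, rev (rev e) = e)
    (tail head : E → V) (htail_rev : ∀ e, tail (rev e) = head e)
    (c : E → ℝ) (hc : ∀ e, 0 < c e) (hcrev : ∀ e, c (rev e) = c e)
    (U : Finset V)
    (h : V → ℝ)
    (hharm : ∀ x ∈ U, h x * ∑ e ∈ univ.filter (fun e => tail e = x), c e =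
      ∑ e ∈ univ.filter (fun e => tail e = x), c e * h (head e))
    (θ : E → ℝ) (hθanti : ∀ e, θ (rev e) = - θ e)
    (hflow : ∀ x ∈ U, ∑ e ∈ univ.filter (fun e => tail e = x), θ e = 0)
    (f : V → ℝ) (hf : ∀ x ∉ U, f x = h x) :
    energyE c (fun e => c e * (f (head e) - f (tail e))
        - c e * (h (head e) - h (tail e)))
      + energyE c (fun e => θ e - c e * (h (head e) - h (tail e)))
      = energyE c (fun e => c e * (f (head e) - f (tail e)) - θ e) := by
  have hhead_rev := head_rev_of_tail_rev hrev htail_rev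
  set φ : E → ℝ := fun e => θ e - c e * (h (head e) - h (tail e))
  have hφanti : ∀ e, φ (rev e) = -φ e := fun e => by
    simp only [φ, htail_rev, hhead_rev, hcrev, hθanti]
    ring
  have hφflow : ∀ x ∈ U, ∑ e ∈ univ.filter (fun e => tail e = x), φ e = 0 := by
    intro x hx
    rw [sum_sub_distrib, hflow x hx, sum_grad_eq_zero_of_harmonic (hharm x hx), sub_zero]
  have horth := sum_grad_mul_eq_zero (g := f - h) hrev hhead_rev hφanti
    (fun x hx => sub_eq_zero.2 (hf x hx)) hφflow
  have hsplit : (fun e => c e * (f (head e) - f (tail e)) - θ e) = fun e =>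
      (c e * (f (head e) - f (tail e)) - c e * (h (head e) - h (tail e))) - φ e :=
    funext fun e => by ring
  have hcross : ∑ e, (c e * (f (head e) - f (tail e)) - c e * (h (head e) - h (tail e))) * φ e
      * (c e)⁻¹ = 0 := by
    rw [← horth]
    refine sum_congr rfl fun e _ => ?_
    field_simp [(hc e).ne']
    simp only [Pi.sub_apply]
    ring
  rw [hsplit, energyE_sub _ _ φ, hcross, sub_zero]

/-- Pythagoras for flows: if `h` is discrete harmonic on `U`,
`θ` is a flow on `U`, and `f = h` off `U`, then
`ℰ(c df − c dh) + ℰ(θ − c dh) = ℰ(c df − θ)`. -/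
theorem stmt_5 {V E : Type*} [Fintype V] [Fintype E] [DecidableEq V]
    (rev : E → E) (hrev : ∀ e, rev (rev e) = e) (hrevne : ∀ e, rev e ≠ e)
    (tail head : E → V) (htail_rev : ∀ e, tail (rev e) = head e)
    (c : E → ℝ) (hc : ∀ e, 0 < c e) (hcrev : ∀ e, c (rev e) = c e)
    (hconn : ∀ x y : V,
      Relation.ReflTransGen (fun a b => ∃ e, tail e = a ∧ head e = b) x y)
    (U : Finset V) (hU : U ≠ univ)
    (h : V → ℝ)
    (hharm : ∀ x ∈ U, h x * ∑ e ∈ univ.filter (fun e => tail e = x), c e =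
      ∑ e ∈ univ.filter (fun e => tail e = x), c e * h (head e))
    (θ : E → ℝ) (hθanti : ∀ e, θ (rev e) = - θ e)
    (hflow : ∀ x ∈ U, ∑ e ∈ univ.filter (fun e => tail e = x), θ e = 0)
    (f : V → ℝ) (hf : ∀ x ∉ U, f x = h x) :
    energyE c (fun e => c e * (f (head e) - f (tail e))
        - c e * (h (head e) - h (tail e)))
      + energyE c (fun e => θ e - c e * (h (head e) - h (tail e)))
      = energyE c (fun e => c e * (f (head e) - f (tail e)) - θ e) :=
  stmt_5_general rev hrev tail head htail_rev c hc hcrev U h hharm θ hθanti hflow f hf
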